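/- arXiv:1605.05354 — 2 statements merged into one kernel-verified Lean document; each statement's English description precedes it below -/
import Mathlib

section
/- If a subshift X has left almost specification with constant mistake function g ≡ m, then every word u ∈ L(X̂) in the language of the measure center X̂ of X occurs at least m+1 times disjointly in some point of X; more precisely, for every u ∈ L(X̂) there is a word w ∈ L(X) containing at least m+1 disjoint occurrences of u. -/
open Real Filter MeasureTheory

/-- The left shift map on bi-infinite sequences. -/
def shiftMap {A : Type*} (x : ℤ → A) : ℤ → A := fun i => x (i + 1)

/-- The word of length `n` read from `x` starting at position `i`. -/
def wordAt {A : Type*} (x : ℤ → A) (i : ℤ) (n : ℕ) : List A :=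
  List.ofFn (fun k : Fin n => x (i + (k : ℕ)))

/-- A word `w` belongs to the language of a set `S` of bi-infinite sequences if it
occurs somewhere in some point of `S`. -/
def InLangS {A : Type*} (S : Set (ℤ → A)) (w : List A) : Prop :=
  ∃ x ∈ S, ∃ i : ℤ, wordAt x i w.length = w

/-- Hamming distance between two words of the same length: the number of
positions at which they differ. -/
def listHamming {A : Type*} [DecidableEq A] (v w : List A) : ℕ :=
  (List.zipWith (fun a b => if a = b then 0 else 1) v w).sum

/-- A subshift: a closed, shift-invariant set of bi-infinite sequences over a
finite (discrete) alphabet. -/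
structure Subshift (A : Type*) [TopologicalSpace A] where
  carrier : Set (ℤ → A)
  isClosed : IsClosed carrier
  invariant : ∀ x ∈ carrier, shiftMap x ∈ carrier

/-- Topological entropy of (the language of) `S`, as the infimum of
`(1/n) log |L_n(S)|` (equal to the limit by subadditivity). -/
noncomputable def langEntropy {A : Type*} (S : Set (ℤ → A)) : ℝ :=
  ⨅ n : ℕ+, Real.log ({w : List A | w.length = (n : ℕ) ∧ InLangS S w}.ncard) / (n : ℝ)

/-- The cylinder set of points agreeing with `w : Fin n → A` on coordinates
`0, …, n-1`. -/
def cylF {A : Type*} (n : ℕ) (w : Fin n → A) : Set (ℤ → A) :=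
  {x : ℤ → A | ∀ i : Fin n, x ((i : ℕ) : ℤ) = w i}

/-- The cylinder set `[w]` of points beginning (at coordinate 0) with the word `w`. -/
def cylList {A : Type*} (w : List A) : Set (ℤ → A) :=
  {x : ℤ → A | wordAt x 0 w.length = w}

/-- The `n`-th partition entropy `H_n(μ) = -∑_{w ∈ A^n} μ[w] log μ[w]`. -/
noncomputable def partEntropy {A : Type*} [Fintype A] [MeasurableSpace A]
    (μ : MeasureTheory.Measure (ℤ → A)) (n : ℕ) : ℝ :=
  ∑ w : Fin n → A, Real.negMulLog ((μ (cylF n w)).toReal)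

/-- Measure-theoretic entropy of a shift-invariant measure, as
`inf_n H_n(μ)/n` (equal to the limit by subadditivity). -/
noncomputable def measEntropy {A : Type*} [Fintype A] [MeasurableSpace A]
    (μ : MeasureTheory.Measure (ℤ → A)) : ℝ :=
  ⨅ n : ℕ+, partEntropy μ (n : ℕ) / (n : ℝ)

/-! By Poincaré recurrence, `μ`-almost every point of `[u]` returns to `[u]` infinitely often
under the shift, so some point of `X` carries infinitely many occurrences of `u` at positions
`N ≥ 0`; spacing them out gives `m + 1` disjoint occurrences inside one finite window of that
point, which is a word of `L(X)`. -/

section Words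

variable {A : Type*}

lemma shiftMap_iterate_apply (x : ℤ → A) (N : ℕ) (j : ℤ) : shiftMap^[N] x j = x (j + N) := by
  induction N generalizing x with
  | zero => simp
  | succ N ih =>
    rw [Function.iterate_succ_apply, ih, Nat.cast_succ, ← add_assoc]
    rfl

lemma wordAt_shiftMap_iterate (x : ℤ → A) (N : ℕ) (i : ℤ) (n : ℕ) :
    wordAt (shiftMap^[N] x) i n = wordAt x (i + N) n := by
  simp only [wordAt, shiftMap_iterate_apply, add_right_comm]

lemma shiftMap_iterate_mem_cylList_iff (x : ℤ → A) (N : ℕ) (u : List A) :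
    shiftMap^[N] x ∈ cylList u ↔ wordAt x N u.length = u := by
  rw [cylList, Set.mem_ofPred_eq, wordAt_shiftMap_iterate, zero_add]

@[simp]
lemma length_wordAt (x : ℤ → A) (i : ℤ) (n : ℕ) : (wordAt x i n).length = n := by
  simp [wordAt]

lemma take_drop_wordAt (x : ℤ → A) (i : ℤ) {a b L : ℕ} (h : a + b ≤ L) :
    ((wordAt x i L).drop a).take b = wordAt x (i + a) b := by
  apply List.ext_getElem
  · simp only [List.length_take, List.length_drop, length_wordAt]
    omega
  · intro k _ _
    simp only [List.getElem_take, List.getElem_drop, wordAt, List.getElem_ofFn]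
    congr 1
    push_cast
    ring

lemma exists_disjoint_occurrences_of_frequently {x : ℤ → A} {u : List A}
    (h : ∃ᶠ N : ℕ in atTop, wordAt x N u.length = u) :
    ∃ p : ℕ → ℕ, (∀ i j, i < j → p i + u.length ≤ p j) ∧
      ∀ i, wordAt x (p i) u.length = u := by
  obtain ⟨φ, hφ, hocc⟩ := extraction_of_frequently_atTop h
  -- a strictly increasing `φ` satisfies `φ a + k ≤ φ (a + k)`, so every `|u|`-th term will do
  refine ⟨fun i => φ (u.length * i), fun i j hij => ?_, fun i => hocc _⟩
  have hgap : u.length + u.length * i ≤ u.length * j := by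
    rw [Nat.add_comm, ← Nat.mul_succ]
    exact Nat.mul_le_mul_left _ hij
  calc φ (u.length * i) + u.length
      = u.length + φ (u.length * i) := Nat.add_comm _ _
    _ ≤ φ (u.length + u.length * i) := hφ.add_le_nat _ _
    _ ≤ φ (u.length * j) := hφ.monotone hgap

end Words

section Measure

variable {A : Type*} [MeasurableSpace A] [MeasurableSingletonClass A]

lemma measurableSet_cylList (u : List A) : MeasurableSet (cylList u) := by
  have : cylList u = ⋂ k : Fin u.length, (fun x : ℤ → A => x (k : ℕ)) ⁻¹' {u[k]} := by
    ext x
    simp [cylList, wordAt, List.ext_getElem_iff, Fin.forall_iff]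
  rw [this]
  exact MeasurableSet.iInter fun k => measurable_pi_apply _ (measurableSet_singleton _)

lemma exists_mem_frequently_wordAt_eq {μ : Measure (ℤ → A)} [IsFiniteMeasure μ]
    (hμ : MeasurePreserving shiftMap μ μ) {u : List A} {S : Set (ℤ → A)}
    (hS : μ (cylList u ∩ S) ≠ 0) :
    ∃ x ∈ S, ∃ᶠ N : ℕ in atTop, wordAt x N u.length = u := by
  have hrec := hμ.conservative.ae_mem_imp_frequently_image_mem
    (measurableSet_cylList u).nullMeasurableSet
  obtain ⟨x, ⟨hxu, hxS⟩, hfreq⟩ :=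
    Measure.exists_mem_of_measure_ne_zero_of_ae hS (ae_restrict_of_ae hrec)
  refine ⟨x, hxS, (hfreq hxu).mono fun N hN => ?_⟩
  rwa [shiftMap_iterate_mem_cylList_iff] at hN

end Measure

theorem stmt10_general {A : Type*} [Fintype A]
    [TopologicalSpace A] [DiscreteTopology A]
    [MeasurableSpace A] [MeasurableSingletonClass A]
    (X : Subshift A) (m : ℕ) :
    ∀ u : List A,
      (∃ μ : MeasureTheory.Measure (ℤ → A), MeasureTheory.IsProbabilityMeasure μ ∧
        MeasureTheory.MeasurePreserving shiftMap μ μ ∧ μ X.carrier = 1 ∧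
        0 < μ (cylList u)) →
      ∃ w : List A, InLangS X.carrier w ∧
        ∃ p : Fin (m + 1) → ℕ,
          (∀ i j : Fin (m + 1), i < j → p i + u.length ≤ p j) ∧
          (∀ i : Fin (m + 1), p i + u.length ≤ w.length ∧
            ((w.drop (p i)).take u.length = u)) := by
  rintro u ⟨μ, hprob, hμ, hX, hu⟩
  have hXc : μ X.carrierᶜ = 0 := (prob_compl_eq_zero_iff X.isClosed.measurableSet).2 hX
  have hpos : μ (cylList u ∩ X.carrier) ≠ 0 := by
    rw [measure_inter_conull hXc]
    exact hu.ne'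
  obtain ⟨x, hxX, hfreq⟩ := exists_mem_frequently_wordAt_eq hμ hpos
  obtain ⟨p, hdisj, hocc⟩ := exists_disjoint_occurrences_of_frequently hfreq
  have hwindow (i : Fin (m + 1)) : p i + u.length ≤ p m + u.length := by
    rcases (Nat.lt_succ_iff.1 i.isLt).lt_or_eq with h | h
    · have := hdisj _ _ h
      omega
    · rw [h]
  refine ⟨wordAt x 0 (p m + u.length), ⟨x, hxX, 0, by rw [length_wordAt]⟩, fun i => p i,
    fun i j hij => hdisj i j hij, fun i => ⟨by simpa using hwindow i, ?_⟩⟩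
  rw [take_drop_wordAt x 0 (hwindow i), zero_add, hocc]

/-- If `X` has LAS with constant mistake function `g ≡ m`, then every word `u` in
the language of the measure center (equivalently: every `u` with `μ([u]) > 0` for
some shift-invariant probability measure `μ` supported on `X`) occurs at least
`m+1` times disjointly in a single word of `L(X)`. -/
theorem stmt10 {A : Type*} [Fintype A] [DecidableEq A]
    [TopologicalSpace A] [DiscreteTopology A]
    [MeasurableSpace A] [MeasurableSingletonClass A]
    (X : Subshift A) (m : ℕ)
    (hLAS : ∀ w1 w2 : List A, InLangS X.carrier w1 → InLangS X.carrier w2 →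
      ∃ b : List A, b.length = w1.length ∧ InLangS X.carrier b ∧
        listHamming b w1 ≤ m ∧ InLangS X.carrier (b ++ w2)) :
    ∀ u : List A,
      (∃ μ : MeasureTheory.Measure (ℤ → A), MeasureTheory.IsProbabilityMeasure μ ∧
        MeasureTheory.MeasurePreserving shiftMap μ μ ∧ μ X.carrier = 1 ∧
        0 < μ (cylList u)) →
      ∃ w : List A, InLangS X.carrier w ∧
        ∃ p : Fin (m + 1) → ℕ,
          (∀ i j : Fin (m + 1), i < j → p i + u.length ≤ p j) ∧
          (∀ i : Fin (m + 1), p i + u.length ≤ w.length ∧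
            ((w.drop (p i)).take u.length = u)) :=
  stmt10_general X m
end

section
/- If an irreducible subshift X has almost specification with constant mistake function g ≡ 1, then X has either left almost specification with g ≡ 1 or right almost specification with g ≡ 1. -/
open Real Filter MeasureTheory

/-!
Suppose left almost specification fails for some pair `u₁, v₁`: no word at Hamming distance
at most one from `u₁` can be followed by `v₁`. Given arbitrary `u, v`, bridge `v₁` to `u` by
irreducibility and apply almost specification to the three words `u₁`, `v₁ z u`, `v`. The single
mistake allowed in the middle word cannot leave `v₁` intact, since the corrected `u₁` would then
be followed by `v₁`; so it falls in `v₁`, and `u` followed by the corrected `v` is a factor of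
the glued word.
-/

section

variable {A : Type*}

lemma wordAt_add (x : ℤ → A) (i : ℤ) (m n : ℕ) :
    wordAt x i (m + n) = wordAt x i m ++ wordAt x (i + m) n := by
  simp only [wordAt, List.ofFn_add, Fin.val_natAdd, Fin.val_castLE, Nat.cast_add,
    add_assoc]

lemma InLangS.of_infix {S : Set (ℤ → A)} {w w' : List A} (h : w <:+: w')
    (hw' : InLangS S w') : InLangS S w := by
  obtain ⟨s, t, rfl⟩ := h
  obtain ⟨x, hx, i, hi⟩ := hw'
  simp only [List.length_append, wordAt_add] at hi
  exact ⟨x, hx, i + s.length,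
    (List.append_inj (List.append_inj hi (by simp [wordAt])).1 (by simp [wordAt])).2⟩

variable [DecidableEq A]

def AlmostSpecOne (S : Set (ℤ → A)) : Prop :=
  ∀ (k : ℕ) (ws : Fin k → List A), (∀ i, InLangS S (ws i)) →
    ∃ bars : Fin k → List A,
      (∀ i, (bars i).length = (ws i).length ∧ listHamming (bars i) (ws i) ≤ 1 ∧
        InLangS S (bars i)) ∧
      InLangS S (List.ofFn bars).flatten

lemma listHamming_append {a b c d : List A} (h : a.length = c.length) :
    listHamming (a ++ b) (c ++ d) = listHamming a c + listHamming b d := by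
  rw [listHamming, List.zipWith_append h, List.sum_append, listHamming, listHamming]

lemma eq_of_listHamming_eq_zero {v w : List A} (h : listHamming v w = 0)
    (hl : v.length = w.length) : v = w := by
  induction v generalizing w with
  | nil => exact (List.length_eq_zero_iff.1 hl.symm).symm
  | cons a t ih =>
    obtain _ | ⟨b, s⟩ := w
    · simp at hl
    · rw [listHamming, List.zipWith_cons_cons, List.sum_cons, ← listHamming.eq_1] at h
      split_ifs at h with hab
      · exact hab ▸ congrArg (a :: ·) (ih (by omega) (by simpa using hl))
      · omega

lemma exists_eq_append_of_listHamming_append_le_one {b v w : List A}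
    (hlen : b.length = (v ++ w).length) (h : listHamming b (v ++ w) ≤ 1) :
    ∃ p q, b = p ++ q ∧ (p = v ∨ q = w) := by
  have hp : (b.take v.length).length = v.length := by simp [hlen]
  have hq : (b.drop v.length).length = w.length := by simp [hlen]
  rw [← List.take_append_drop v.length b, listHamming_append hp] at h
  refine ⟨_, _, (List.take_append_drop v.length b).symm, ?_⟩
  by_cases h0 : listHamming (b.take v.length) v = 0
  · exact .inl (eq_of_listHamming_eq_zero h0 hp)
  · exact .inr (eq_of_listHamming_eq_zero (by omega) hq)

lemma AlmostSpecOne.exists_three {S : Set (ℤ → A)} (hAS : AlmostSpecOne S)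
    {w₁ w₂ w₃ : List A} (h₁ : InLangS S w₁) (h₂ : InLangS S w₂) (h₃ : InLangS S w₃) :
    ∃ b₁ b₂ b₃ : List A,
      (b₁.length = w₁.length ∧ listHamming b₁ w₁ ≤ 1) ∧
      (b₂.length = w₂.length ∧ listHamming b₂ w₂ ≤ 1) ∧
      (b₃.length = w₃.length ∧ listHamming b₃ w₃ ≤ 1) ∧
      InLangS S (b₁ ++ b₂ ++ b₃) := by
  obtain ⟨bars, hbars, hflat⟩ := hAS 3 ![w₁, w₂, w₃] (Fin.forall_fin_succ.2
    ⟨h₁, Fin.forall_fin_succ.2 ⟨h₂, Fin.forall_fin_succ.2 ⟨h₃, fun i => i.elim0⟩⟩⟩)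
  refine ⟨bars 0, bars 1, bars 2, ⟨(hbars 0).1, (hbars 0).2.1⟩,
    ⟨(hbars 1).1, (hbars 1).2.1⟩, ⟨(hbars 2).1, (hbars 2).2.1⟩, ?_⟩
  simpa [List.ofFn_succ] using hflat

end

theorem stmt12_general {A : Type*} [DecidableEq A]
    [TopologicalSpace A]
    (X : Subshift A)
    (hirr : ∀ u v : List A, InLangS X.carrier u → InLangS X.carrier v →
      ∃ z : List A, InLangS X.carrier (u ++ z ++ v))
    (hAS : ∀ (k : ℕ) (ws : Fin k → List A), (∀ i, InLangS X.carrier (ws i)) →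
      ∃ bars : Fin k → List A,
        (∀ i, (bars i).length = (ws i).length ∧ listHamming (bars i) (ws i) ≤ 1 ∧
          InLangS X.carrier (bars i)) ∧
        InLangS X.carrier (List.ofFn bars).flatten) :
    (∀ u v : List A, InLangS X.carrier u → InLangS X.carrier v →
      ∃ u' : List A, u'.length = u.length ∧ listHamming u' u ≤ 1 ∧
        InLangS X.carrier (u' ++ v)) ∨
    (∀ u v : List A, InLangS X.carrier u → InLangS X.carrier v →
      ∃ v' : List A, v'.length = v.length ∧ listHamming v' v ≤ 1 ∧
        InLangS X.carrier (u ++ v')) := by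
  refine or_iff_not_imp_left.2 fun hL u v hu hv => ?_
  push Not at hL
  obtain ⟨u₁, v₁, hu₁, hv₁, hbad⟩ := hL
  obtain ⟨z, hz⟩ := hirr v₁ u hv₁ hu
  rw [List.append_assoc] at hz
  obtain ⟨a, b, c, ha, hb, hc, habc⟩ := AlmostSpecOne.exists_three hAS hu₁ hz hv
  obtain ⟨p, q, rfl, rfl | rfl⟩ := exists_eq_append_of_listHamming_append_le_one hb.1 hb.2
  · exact absurd (habc.of_infix ⟨[], q ++ c, by simp⟩) (hbad a ha.1 ha.2)
  · exact ⟨c, hc.1, hc.2, habc.of_infix ⟨a ++ p ++ z, [], by simp⟩⟩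

/-- If an irreducible subshift has almost specification with `g ≡ 1`, then it has
either left almost specification with `g ≡ 1` or right almost specification with
`g ≡ 1`. -/
theorem stmt12 {A : Type*} [Fintype A] [DecidableEq A]
    [TopologicalSpace A] [DiscreteTopology A]
    (X : Subshift A)
    (hirr : ∀ u v : List A, InLangS X.carrier u → InLangS X.carrier v →
      ∃ z : List A, InLangS X.carrier (u ++ z ++ v))
    (hAS : ∀ (k : ℕ) (ws : Fin k → List A), (∀ i, InLangS X.carrier (ws i)) →
      ∃ bars : Fin k → List A,
        (∀ i, (bars i).length = (ws i).length ∧ listHamming (bars i) (ws i) ≤ 1 ∧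
          InLangS X.carrier (bars i)) ∧
        InLangS X.carrier (List.ofFn bars).flatten) :
    (∀ u v : List A, InLangS X.carrier u → InLangS X.carrier v →
      ∃ u' : List A, u'.length = u.length ∧ listHamming u' u ≤ 1 ∧
        InLangS X.carrier (u' ++ v)) ∨
    (∀ u v : List A, InLangS X.carrier u → InLangS X.carrier v →
      ∃ v' : List A, v'.length = v.length ∧ listHamming v' v ≤ 1 ∧
        InLangS X.carrier (u ++ v')) :=
  stmt12_general X hirr hAS
end
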